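/- For the forward–backward algorithm with deviations, there exists x̄ ∈ zer(A + C) such that x_n converges weakly to x̄, i.e. ⟨x_n, w⟩ → ⟨x̄, w⟩ for every w ∈ H. -/

import Mathlib

open Filter
open scoped RealInnerProductSpace Pointwise Topology

/-- The `M`-induced norm `‖w‖_M = √⟪w, M w⟫`. -/
noncomputable def mnorm {H : Type*} [NormedAddCommGroup H] [InnerProductSpace ℝ H]
    (M : H →L[ℝ] H) (w : H) : ℝ :=
  Real.sqrt ⟪w, M w⟫

/-!
Fix a zero `q` of `A + C`. Monotonicity of `A` between `(p n, γ⁻¹ M (z n - p n) - C (y n))` and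
`(q, -C q)`, cocoercivity of `C` and Young's inequality give the Fejér-type inequality
`‖x (n+1) - q‖²_M + ℓ_n² ≤ ‖x n - q‖²_M + W n`, where `W n` is the weighted energy of the
deviations `u n, v n`. The safeguard `W (n+1) ≤ ζ_n ℓ_n²` with `ζ_n ≤ 1 - ε` makes
`‖x n - q‖²_M + W n` decrease by at least `ε ℓ_n²`, so `ℓ_n → 0`, the deviations and
`p n - x n` tend to zero strongly, and `‖x n - q‖_M` converges for every zero `q`. The same
monotonicity inequality then forces `C (y n) → C q` strongly. At a weak cluster point `w` of
`x`, cocoercivity gives `C w = C q` and the weak-strong closedness of the graph of the maximally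
monotone `A` gives `-C q ∈ A w`. Opial's lemma concludes.
-/

section

variable {H : Type*} [NormedAddCommGroup H] [InnerProductSpace ℝ H]

def TendstoWeakly (x : ℕ → H) (w : H) : Prop :=
  ∀ v, Tendsto (fun n => ⟪x n, v⟫) atTop (𝓝 ⟪w, v⟫)

namespace TendstoWeakly

variable {x : ℕ → H} {w : H}

theorem of_tendsto_sub {y : ℕ → H} (h : TendstoWeakly x w)
    (hxy : Tendsto (fun n => y n - x n) atTop (𝓝 0)) : TendstoWeakly y w := fun v => by
  simpa only [← inner_add_left, add_sub_cancel, inner_zero_left, add_zero] using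
    (h v).add (hxy.inner (tendsto_const_nhds (x := v)))

/-- By the uniform boundedness principle. -/
theorem isBounded_range [CompleteSpace H] (h : TendstoWeakly x w) :
    Bornology.IsBounded (Set.range x) := by
  obtain ⟨R, hR⟩ := banach_steinhaus (g := fun n => InnerProductSpace.toDual ℝ H (x n))
    fun v => (isBounded_iff_forall_norm_le.mp (Metric.isBounded_range_of_tendsto _ (h v))).imp
      fun R hR n => hR _ ⟨n, rfl⟩
  refine isBounded_iff_forall_norm_le.mpr ⟨R, ?_⟩
  rintro _ ⟨n, rfl⟩
  simpa using hR n

theorem tendsto_inner [CompleteSpace H] {g : ℕ → H} {g₀ : H} (h : TendstoWeakly x w)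
    (hg : Tendsto g atTop (𝓝 g₀)) : Tendsto (fun n => ⟪g n, x n⟫) atTop (𝓝 ⟪g₀, w⟫) := by
  obtain ⟨R, hR⟩ := isBounded_iff_forall_norm_le.mp h.isBounded_range
  have hsmall : Tendsto (fun n => ⟪g n - g₀, x n⟫) atTop (𝓝 0) := by
    refine squeeze_zero_norm (fun n => (norm_inner_le_norm _ _).trans
      (mul_le_mul_of_nonneg_left (hR _ ⟨n, rfl⟩) (norm_nonneg _))) ?_
    simpa using (tendsto_iff_norm_sub_tendsto_zero.mp hg).mul_const R
  have hlim := hsmall.add (h g₀)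
  rw [zero_add, real_inner_comm] at hlim
  refine hlim.congr fun n => ?_
  rw [inner_sub_left, real_inner_comm (x n) g₀, sub_add_cancel]

end TendstoWeakly

/-- Banach–Alaoglu in the separable closed span of the sequence, transported back to `H` by the
Riesz representation. -/
theorem exists_strictMono_tendstoWeakly [CompleteSpace H] {x : ℕ → H}
    (hx : Bornology.IsBounded (Set.range x)) :
    ∃ w φ, StrictMono φ ∧ TendstoWeakly (x ∘ φ) w := by
  obtain ⟨R, hR⟩ := isBounded_iff_forall_norm_le.mp hx
  set K := (Submodule.span ℝ (Set.range x)).topologicalClosure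
  have hxK (n : ℕ) : x n ∈ K :=
    (Submodule.span ℝ _).le_topologicalClosure (Submodule.subset_span ⟨n, rfl⟩)
  have : CompleteSpace K := (Submodule.isClosed_topologicalClosure _).completeSpace_coe
  have : TopologicalSpace.SeparableSpace K :=
    (Set.countable_range x).isSeparable.span.closure.separableSpace
  let f (n : ℕ) : StrongDual ℝ K := InnerProductSpace.toDual ℝ K ⟨x n, hxK n⟩
  have hf (n : ℕ) : ‖f n‖ ≤ R := by
    rw [LinearIsometryEquiv.norm_map]
    exact hR _ ⟨n, rfl⟩
  obtain ⟨L, -, φ, hφ, hL⟩ := WeakDual.isSeqCompact_closedBall ℝ K 0 R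
    (x := fun n => StrongDual.toWeakDual (f n)) fun n => mem_closedBall_zero_iff.mpr (hf n)
  refine ⟨(InnerProductSpace.toDual ℝ K).symm (WeakDual.toStrongDual L), φ, hφ, fun v => ?_⟩
  have hKv := ((WeakDual.eval_continuous (K.orthogonalProjectionOnto v)).tendsto L).comp hL
  convert hKv using 1
  · funext k
    simp [f]
  · rw [← Submodule.inner_orthogonalProjectionOnto_eq_of_mem_left,
      InnerProductSpace.toDual_symm_apply]
    rfl

section QuadraticForm

variable {M : H →L[ℝ] H}

theorem inner_map_comm (hM : M.IsSymmetric) (a b : H) :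
    ⟪a, M b⟫ = ⟪b, M a⟫ := by
  rw [real_inner_comm]
  exact hM b a

theorem inner_map_self_nonneg {c : ℝ} (hc0 : 0 < c) (hc : ∀ a, ⟪a, M a⟫ ≥ c * ‖a‖ ^ 2) (a : H) :
    0 ≤ ⟪a, M a⟫ :=
  (hc a).trans' (by positivity)

theorem eq_zero_of_inner_map_self_le_zero {c : ℝ} (hc0 : 0 < c)
    (hc : ∀ a, ⟪a, M a⟫ ≥ c * ‖a‖ ^ 2) {a : H} (ha : ⟪a, M a⟫ ≤ 0) : a = 0 := by
  have : c * ‖a‖ ^ 2 ≤ 0 := (hc a).trans ha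
  exact norm_eq_zero.mp (pow_eq_zero_iff two_ne_zero |>.mp
    (le_antisymm (nonpos_of_mul_nonpos_right this hc0) (sq_nonneg _)))

theorem tendsto_zero_of_tendsto_inner_map_self {c : ℝ} (hc0 : 0 < c)
    (hc : ∀ a, ⟪a, M a⟫ ≥ c * ‖a‖ ^ 2) {ι : Type*} {l : Filter ι} {f : ι → H}
    (hf : Tendsto (fun i => ⟪f i, M (f i)⟫) l (𝓝 0)) : Tendsto f l (𝓝 0) := by
  refine squeeze_zero_norm (fun i => ?_) (by simpa using (hf.div_const c).sqrt)
  rw [Real.le_sqrt (norm_nonneg _) (div_nonneg (inner_map_self_nonneg hc0 hc _) hc0.le),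
    le_div_iff₀ hc0, mul_comm]
  exact hc (f i)

/-- Young's inequality for the dual norms `‖·‖_M` and `‖·‖_{M⁻¹}`. -/
theorem neg_inner_le_of_rightInverse (hM : M.IsSymmetric) (hpos : ∀ a, 0 ≤ ⟪a, M a⟫)
    {Minv : H →L[ℝ] H} (hMinv : ∀ a, M (Minv a) = a) {t : ℝ} (ht : 0 < t) (g d : H) :
    -⟪g, d⟫ ≤ t * ⟪g, Minv g⟫ + ⟪d, M d⟫ / (4 * t) := by
  have h := hpos ((2 * t) • Minv g + d)
  simp only [map_add, map_smul, hMinv, inner_add_left, inner_add_right, real_inner_smul_left,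
    real_inner_smul_right, inner_map_comm hM (Minv g) d] at h
  rw [real_inner_comm d g, real_inner_comm (Minv g) g, ← sub_nonneg]
  have e : t * ⟪Minv g, g⟫ + ⟪d, M d⟫ / (4 * t) - -⟪d, g⟫
      = (4 * t ^ 2 * ⟪Minv g, g⟫ + 4 * t * ⟪d, g⟫ + ⟪d, M d⟫) / (4 * t) := by
    field_simp
    ring
  rw [e]
  exact div_nonneg (by linarith) (by positivity)

theorem inner_map_add_smul_self (hM : M.IsSymmetric) (a w : H) (t : ℝ) :
    ⟪a + t • w, M (a + t • w)⟫ = ⟪a, M a⟫ + 2 * t * ⟪w, M a⟫ + t ^ 2 * ⟪w, M w⟫ := by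
  simp only [map_add, map_smul, inner_add_left, inner_add_right, real_inner_smul_left,
    real_inner_smul_right, inner_map_comm hM a w]
  ring

theorem mnorm_sq (hpos : ∀ a, 0 ≤ ⟪a, M a⟫) (a : H) : mnorm M a ^ 2 = ⟪a, M a⟫ :=
  Real.sq_sqrt (hpos a)

section RightInverse

variable {Minv : H →L[ℝ] H}

theorem inner_rightInverse_self (hMinv : ∀ a, M (Minv a) = a) (g : H) :
    ⟪g, Minv g⟫ = ⟪Minv g, M (Minv g)⟫ := by
  rw [hMinv, real_inner_comm]

theorem inner_rightInverse_self_nonneg (hMinv : ∀ a, M (Minv a) = a) {c : ℝ} (hc0 : 0 < c)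
    (hc : ∀ a, ⟪a, M a⟫ ≥ c * ‖a‖ ^ 2) (g : H) : 0 ≤ ⟪g, Minv g⟫ :=
  (inner_rightInverse_self hMinv g).symm ▸ inner_map_self_nonneg hc0 hc _

theorem eq_zero_of_inner_rightInverse_self_le_zero (hMinv : ∀ a, M (Minv a) = a) {c : ℝ}
    (hc0 : 0 < c) (hc : ∀ a, ⟪a, M a⟫ ≥ c * ‖a‖ ^ 2) {g : H} (hg : ⟪g, Minv g⟫ ≤ 0) : g = 0 := by
  rw [inner_rightInverse_self hMinv] at hg
  rw [← hMinv g, eq_zero_of_inner_map_self_le_zero hc0 hc hg, map_zero]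

theorem tendsto_zero_of_tendsto_inner_rightInverse_self (hMinv : ∀ a, M (Minv a) = a) {c : ℝ}
    (hc0 : 0 < c) (hc : ∀ a, ⟪a, M a⟫ ≥ c * ‖a‖ ^ 2) {ι : Type*} {l : Filter ι} {g : ι → H}
    (hg : Tendsto (fun i => ⟪g i, Minv (g i)⟫) l (𝓝 0)) : Tendsto g l (𝓝 0) := by
  simp only [inner_rightInverse_self hMinv] at hg
  have := (M.continuous.tendsto 0).comp (tendsto_zero_of_tendsto_inner_map_self hc0 hc hg)
  simpa only [map_zero, Function.comp_def, hMinv] using this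

end RightInverse

theorem TendstoWeakly.eq_of_tendsto_inner_map_sub {c : ℝ} (hc0 : 0 < c)
    (hc : ∀ a, ⟪a, M a⟫ ≥ c * ‖a‖ ^ 2) (hM : M.IsSymmetric) {x : ℕ → H} {φ₁ φ₂ : ℕ → ℕ}
    {w₁ w₂ : H} (hφ₁ : Tendsto φ₁ atTop atTop) (hφ₂ : Tendsto φ₂ atTop atTop)
    (h₁ : TendstoWeakly (x ∘ φ₁) w₁) (h₂ : TendstoWeakly (x ∘ φ₂) w₂)
    (hL₁ : ∃ L, Tendsto (fun n => ⟪x n - w₁, M (x n - w₁)⟫) atTop (𝓝 L))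
    (hL₂ : ∃ L, Tendsto (fun n => ⟪x n - w₂, M (x n - w₂)⟫) atTop (𝓝 L)) : w₁ = w₂ := by
  obtain ⟨L₁, hL₁⟩ := hL₁
  obtain ⟨L₂, hL₂⟩ := hL₂
  have hid (n : ℕ) : ⟪x n, M (w₁ - w₂)⟫ = (⟪x n - w₂, M (x n - w₂)⟫ - ⟪x n - w₁, M (x n - w₁)⟫
      + ⟪w₁, M w₁⟫ - ⟪w₂, M w₂⟫) / 2 := by
    simp only [map_sub, inner_sub_left, inner_sub_right, inner_map_comm hM w₁ (x n),
      inner_map_comm hM w₂ (x n)]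
    ring
  have hlim : Tendsto (fun n => ⟪x n, M (w₁ - w₂)⟫) atTop
      (𝓝 ((L₂ - L₁ + ⟪w₁, M w₁⟫ - ⟪w₂, M w₂⟫) / 2)) := by
    simp_rw [hid]
    exact (((hL₂.sub hL₁).add_const _).sub_const _).div_const 2
  have e₁ := tendsto_nhds_unique (h₁ _) (hlim.comp hφ₁)
  have e₂ := tendsto_nhds_unique (h₂ _) (hlim.comp hφ₂)
  refine sub_eq_zero.mp (eq_zero_of_inner_map_self_le_zero hc0 hc ?_)
  rw [inner_sub_left, e₁, e₂, sub_self]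

/-- Opial's lemma, for the norm `‖·‖_M`. -/
theorem exists_tendstoWeakly_of_opial [CompleteSpace H] {c : ℝ} (hc0 : 0 < c)
    (hc : ∀ a, ⟪a, M a⟫ ≥ c * ‖a‖ ^ 2) (hM : M.IsSymmetric) {S : Set H} {x : ℕ → H}
    (hx : Bornology.IsBounded (Set.range x))
    (hdist : ∀ q ∈ S, ∃ L, Tendsto (fun n => ⟪x n - q, M (x n - q)⟫) atTop (𝓝 L))
    (hclust : ∀ φ w, Tendsto φ atTop atTop → TendstoWeakly (x ∘ φ) w → w ∈ S) :
    ∃ w ∈ S, TendstoWeakly x w := by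
  obtain ⟨w, φ, hφ, hw⟩ := exists_strictMono_tendstoWeakly hx
  have hwS := hclust φ w hφ.tendsto_atTop hw
  refine ⟨w, hwS, fun v => tendsto_of_subseq_tendsto fun ns hns => ?_⟩
  obtain ⟨w', ψ, hψ, hw'⟩ :=
    exists_strictMono_tendstoWeakly (hx.subset (Set.range_comp_subset_range ns x))
  have hnsψ : Tendsto (ns ∘ ψ) atTop atTop := hns.comp hψ.tendsto_atTop
  have hw'S := hclust _ w' hnsψ hw'
  obtain rfl := hw'.eq_of_tendsto_inner_map_sub hc0 hc hM hnsψ hφ.tendsto_atTop hw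
    (hdist w' hw'S) (hdist w hwS)
  exact ⟨ψ, hw' v⟩

end QuadraticForm

section MonotoneOperator

variable {M Minv : H →L[ℝ] H} {A : H → Set H} {C : H → H} {β γ : ℝ}

theorem inv_smul_sub_mem_of_sub_smul_mem_smul {S : Set H} (hγ : γ ≠ 0) {a b : H}
    (h : a - γ • b ∈ γ • S) : γ⁻¹ • a - b ∈ S := by
  obtain ⟨s, hs, he⟩ := Set.mem_smul_set.mp h
  have : γ⁻¹ • a - b = s := by
    rw [← inv_smul_smul₀ hγ s, he, smul_sub, inv_smul_smul₀ hγ]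
  exact this ▸ hs

theorem mul_cocoercive_add_inner_le
    (hAmono : ∀ a b ua vb : H, ua ∈ A a → vb ∈ A b → ⟪ua - vb, a - b⟫ ≥ 0)
    (hM : M.IsSymmetric) (hγ : 0 < γ) {p q y z : H}
    (hC : (1 / β) * ⟪C y - C q, Minv (C y - C q)⟫ ≤ ⟪C y - C q, y - q⟫)
    (hp : γ⁻¹ • M (z - p) - C y ∈ A p) (hq : -C q ∈ A q) :
    γ * ((1 / β) * ⟪C y - C q, Minv (C y - C q)⟫ + ⟪C y - C q, p - y⟫)
      ≤ ⟪z - p, M (p - q)⟫ := by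
  have hmono := hAmono _ _ _ _ hp hq
  have hsplit : ⟪γ⁻¹ • M (z - p) - C y - -C q, p - q⟫
      = γ⁻¹ * ⟪z - p, M (p - q)⟫ - (⟪C y - C q, y - q⟫ + ⟪C y - C q, p - y⟫) := by
    rw [show γ⁻¹ • M (z - p) - C y - -C q = γ⁻¹ • M (z - p) - (C y - C q) by abel,
      inner_sub_left, real_inner_smul_left, hM.apply_clm, ← inner_add_right]
    abel_nf
  calc γ * ((1 / β) * ⟪C y - C q, Minv (C y - C q)⟫ + ⟪C y - C q, p - y⟫)
      ≤ γ * (γ⁻¹ * ⟪z - p, M (p - q)⟫) := by gcongr; linarith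
    _ = ⟪z - p, M (p - q)⟫ := mul_inv_cancel_left₀ hγ.ne' _

theorem inner_sub_map_le_of_cocoercive (hM : M.IsSymmetric) (hpos : ∀ a, 0 ≤ ⟪a, M a⟫)
    (hMinv : ∀ a, M (Minv a) = a) (hβ : 0 < β) (hγ : 0 ≤ γ) {g p q y z : H}
    (hkey : γ * ((1 / β) * ⟪g, Minv g⟫ + ⟪g, p - y⟫) ≤ ⟪z - p, M (p - q)⟫) :
    ⟪p - z, M (p - q)⟫ ≤ γ * β / 4 * ⟪p - y, M (p - y)⟫ := by
  have hyoung := neg_inner_le_of_rightInverse hM hpos hMinv (one_div_pos.mpr hβ) g (p - y)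
  rw [show ⟪p - y, M (p - y)⟫ / (4 * (1 / β)) = β / 4 * ⟪p - y, M (p - y)⟫ by
    field_simp] at hyoung
  rw [← neg_sub z p, inner_neg_left]
  linarith [mul_le_mul_of_nonneg_left hyoung hγ]

theorem mem_of_tendstoWeakly_of_tendsto [CompleteSpace H]
    (hAmono : ∀ a b ua vb : H, ua ∈ A a → vb ∈ A b → ⟪ua - vb, a - b⟫ ≥ 0)
    (hAmax : ∀ a ua : H, (∀ b vb : H, vb ∈ A b → ⟪ua - vb, a - b⟫ ≥ 0) → ua ∈ A a)
    {p r : ℕ → H} {w r₀ : H} (hp : TendstoWeakly p w) (hr : Tendsto r atTop (𝓝 r₀))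
    (hA : ∀ n, r n ∈ A (p n)) : r₀ ∈ A w := by
  refine hAmax w r₀ fun b vb hvb => ?_
  have hlim : Tendsto (fun n => ⟪r n - vb, p n - b⟫) atTop (𝓝 ⟪r₀ - vb, w - b⟫) := by
    simpa only [← inner_sub_right] using (hp.tendsto_inner (hr.sub_const vb)).sub
      ((hr.sub_const vb).inner (tendsto_const_nhds (x := b)))
  exact ge_of_tendsto' hlim fun n => hAmono _ _ _ _ (hA n) hvb

theorem eq_of_tendstoWeakly_of_cocoercive [CompleteSpace H] {P : H →L[ℝ] H} (hβ : 0 < β)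
    (hP : ∀ g, ⟪g, P g⟫ ≤ 0 → g = 0)
    (hC : ∀ a b, (1 / β) * ⟪C a - C b, P (C a - C b)⟫ ≤ ⟪C a - C b, a - b⟫)
    {y : ℕ → H} {w c₀ : H} (hy : TendstoWeakly y w)
    (hCy : Tendsto (fun n => C (y n)) atTop (𝓝 c₀)) : C w = c₀ := by
  have hg : Tendsto (fun n => C (y n) - C w) atTop (𝓝 (c₀ - C w)) := hCy.sub_const _
  have hform := ((hg.inner ((P.continuous.tendsto _).comp hg)).const_mul (1 / β))
  have hpair : Tendsto (fun n => ⟪C (y n) - C w, y n - w⟫) atTop (𝓝 0) := by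
    have := (hy.tendsto_inner hg).sub (hg.inner (tendsto_const_nhds (x := w)))
    simpa only [← inner_sub_right, sub_self] using this
  have hle := le_of_tendsto_of_tendsto' hform hpair fun n => hC _ _
  exact (sub_eq_zero.mp (hP _ (nonpos_of_mul_nonpos_right hle (one_div_pos.mpr hβ)))).symm

end MonotoneOperator

/-- `D + W` is a Lyapunov function, decreasing by at least `ε * ℓ n` at step `n`. -/
theorem tendsto_of_add_le_add_of_le_mul {D W ℓ ζ : ℕ → ℝ} {ε : ℝ} (hε : 0 < ε)
    (hD : ∀ n, 0 ≤ D n) (hW : ∀ n, 0 ≤ W n) (hℓ : ∀ n, 0 ≤ ℓ n) (hζ : ∀ n, ζ n ≤ 1 - ε)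
    (hstep : ∀ n, D (n + 1) + ℓ n ≤ D n + W n) (hdev : ∀ n, W (n + 1) ≤ ζ n * ℓ n) :
    Tendsto ℓ atTop (𝓝 0) ∧ Tendsto W atTop (𝓝 0) ∧ ∃ L, Tendsto D atTop (𝓝 L) := by
  have hdev' (n : ℕ) : W (n + 1) ≤ (1 - ε) * ℓ n :=
    (hdev n).trans (mul_le_mul_of_nonneg_right (hζ n) (hℓ n))
  have hdecr (n : ℕ) : D (n + 1) + W (n + 1) + ε * ℓ n ≤ D n + W n := by
    linarith [hstep n, hdev' n]
  obtain ⟨L, hL⟩ : ∃ L, Tendsto (fun n => D n + W n) atTop (𝓝 L) :=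
    ⟨_, tendsto_atTop_ciInf (antitone_nat_of_succ_le fun n => by linarith [hdecr n, mul_nonneg hε.le (hℓ n)])
      ⟨0, by rintro _ ⟨n, rfl⟩; exact add_nonneg (hD n) (hW n)⟩⟩
  have hℓ0 : Tendsto ℓ atTop (𝓝 0) := by
    refine squeeze_zero (g := fun n => (D n + W n - (D (n + 1) + W (n + 1))) / ε) hℓ
      (fun n => (le_div_iff₀' hε).mpr (by linarith [hdecr n])) ?_
    simpa using (hL.sub (hL.comp (tendsto_add_atTop_nat 1))).div_const ε
  have hW0 : Tendsto W atTop (𝓝 0) := by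
    refine (tendsto_add_atTop_iff_nat 1).mp (squeeze_zero (fun n => hW _) (fun n => ?_) hℓ0)
    linarith [hdev' n, mul_nonneg hε.le (hℓ n)]
  exact ⟨hℓ0, hW0, L, by simpa using hL.sub hW0⟩

theorem isBounded_range_of_tendsto_sub {E : Type*} [SeminormedAddCommGroup E] {x p : ℕ → E}
    (hx : Bornology.IsBounded (Set.range x)) {d : E}
    (hpx : Tendsto (fun n => p n - x n) atTop (𝓝 d)) :
    Bornology.IsBounded (Set.range p) :=
  (hx.add (Metric.isBounded_range_of_tendsto _ hpx)).subset <| by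
    rintro _ ⟨n, rfl⟩
    exact ⟨x n, ⟨n, rfl⟩, p n - x n, ⟨n, rfl⟩, add_sub_cancel _ _⟩

theorem tendsto_zero_of_const_mul_le {a b : ℕ → ℝ} {κ : ℝ} (hκ : 0 < κ) (ha : ∀ n, 0 ≤ a n)
    (hab : ∀ n, κ * a n ≤ b n) (hb : Tendsto b atTop (𝓝 0)) : Tendsto a atTop (𝓝 0) :=
  squeeze_zero ha (fun n => (le_div_iff₀' hκ).mpr (hab n)) (by simpa using hb.div_const κ)

/- The coefficients of the scheme, in terms of the relaxation `l = λ_n`, the step size `γ = γ_n`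
and `β`: `z_n = x_n + zCoeff • u_n + v_n`,
`ℓ_n² = ℓWeight * ‖p_n - x_n + uWeight • u_n - ℓCoeffV • v_n‖²_M`, and the safeguard on the
deviations weighs `‖u_{n+1}‖²_M` by `uWeight` and `‖v_{n+1}‖²_M` by `vWeight`. -/
noncomputable def zCoeff (l γ β : ℝ) : ℝ := (1 - l) * γ * β / (2 - l * γ * β)
noncomputable def uWeight (l γ β : ℝ) : ℝ := l * γ * β / (2 - l * γ * β)
noncomputable def vWeight (l γ β : ℝ) : ℝ := l * (2 - l * γ * β) / (4 - 2 * l - γ * β)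
noncomputable def ℓWeight (l γ β : ℝ) : ℝ := l * (4 - 2 * l - γ * β) / 2
noncomputable def ℓCoeffV (l γ β : ℝ) : ℝ := 2 * (1 - l) / (4 - 2 * l - γ * β)

structure StepParams (ε β γ l : ℝ) : Prop where
  ε_pos : 0 < ε
  β_pos : 0 < β
  step_ge : ε ≤ γ
  relax_ge : ε ≤ l
  relax_le : l ≤ 2 - γ * β / 2 - ε / 2

namespace StepParams

variable {ε β γ l : ℝ}

theorem step_pos (h : StepParams ε β γ l) : 0 < γ := h.ε_pos.trans_le h.step_ge

theorem relax_pos (h : StepParams ε β γ l) : 0 < l := h.ε_pos.trans_le h.relax_ge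

theorem step_mul_pos (h : StepParams ε β γ l) : 0 < γ * β := mul_pos h.step_pos h.β_pos

theorem sq_mul_half_pos (h : StepParams ε β γ l) : 0 < ε ^ 2 * β / 2 := by
  have := h.ε_pos
  have := h.β_pos
  positivity

theorem abs_one_sub_relax_le (h : StepParams ε β γ l) : |1 - l| ≤ 1 := by
  refine abs_le.mpr ⟨?_, ?_⟩ <;> linarith [h.relax_le, h.relax_ge, h.step_mul_pos, h.ε_pos]

theorem two_sub_ge (h : StepParams ε β γ l) : ε ^ 2 * β / 2 ≤ 2 - l * γ * β := by
  have hγβ : ε * β ≤ γ * β := mul_le_mul_of_nonneg_right h.step_ge h.β_pos.le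
  have hlt := mul_le_mul_of_nonneg_right h.relax_le h.step_mul_pos.le
  nlinarith [sq_nonneg (γ * β - 2), mul_le_mul_of_nonneg_left hγβ h.ε_pos.le]

theorem four_sub_ge (h : StepParams ε β γ l) : ε ≤ 4 - 2 * l - γ * β := by
  linarith [h.relax_le]

theorem two_sub_pos (h : StepParams ε β γ l) : 0 < 2 - l * γ * β :=
  h.sq_mul_half_pos.trans_le h.two_sub_ge

theorem four_sub_pos (h : StepParams ε β γ l) : 0 < 4 - 2 * l - γ * β :=
  h.ε_pos.trans_le h.four_sub_ge

theorem uWeight_ge (h : StepParams ε β γ l) : ε ^ 2 * β / 2 ≤ uWeight l γ β := by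
  have hQ := h.two_sub_ge
  have hκ := h.sq_mul_half_pos
  have hlγβ : ε * (ε * β) ≤ l * (γ * β) := mul_le_mul h.relax_ge
    (mul_le_mul_of_nonneg_right h.step_ge h.β_pos.le) (by nlinarith [h.ε_pos, h.β_pos])
    h.relax_pos.le
  rw [uWeight, le_div_iff₀ (by linarith)]
  nlinarith

theorem vWeight_ge (h : StepParams ε β γ l) : ε ^ 3 * β / 8 ≤ vWeight l γ β := by
  have hQ := h.two_sub_ge
  have hS := h.four_sub_ge
  have hl := h.relax_ge
  have hκ := h.sq_mul_half_pos
  have hden : 4 - 2 * l - γ * β ≤ 4 := by linarith [h.step_mul_pos, h.ε_pos]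
  have hκ' : 0 ≤ ε ^ 3 * β / 8 := by have := h.ε_pos; have := h.β_pos; positivity
  rw [vWeight, le_div_iff₀ (by linarith [h.ε_pos])]
  nlinarith [mul_le_mul_of_nonneg_left hden hκ', mul_le_mul hl hQ hκ.le h.relax_pos.le]

theorem ℓWeight_ge (h : StepParams ε β γ l) : ε ^ 2 / 2 ≤ ℓWeight l γ β := by
  have := mul_le_mul h.relax_ge h.four_sub_ge h.ε_pos.le h.relax_pos.le
  rw [ℓWeight, sq]
  linarith

theorem uWeight_nonneg (h : StepParams ε β γ l) : 0 ≤ uWeight l γ β :=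
  h.sq_mul_half_pos.le.trans h.uWeight_ge

theorem vWeight_nonneg (h : StepParams ε β γ l) : 0 ≤ vWeight l γ β :=
  le_trans (by have := h.ε_pos; have := h.β_pos; positivity) h.vWeight_ge

theorem ℓWeight_nonneg (h : StepParams ε β γ l) : 0 ≤ ℓWeight l γ β :=
  le_trans (by have := h.ε_pos; positivity) h.ℓWeight_ge

theorem abs_zCoeff_le (h : StepParams ε β γ l) : |zCoeff l γ β| ≤ 4 / (ε ^ 2 * β / 2) := by
  have hQ := h.two_sub_ge
  have hκ := h.sq_mul_half_pos
  have hnum : |(1 - l) * γ * β| ≤ 4 := by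
    have hγβ : γ * β ≤ 4 := by linarith [h.relax_le, h.relax_ge, h.ε_pos]
    rw [mul_assoc, abs_mul, abs_of_pos h.step_mul_pos]
    nlinarith [mul_le_mul h.abs_one_sub_relax_le hγβ h.step_mul_pos.le zero_le_one]
  rw [zCoeff, abs_div, abs_of_pos (hκ.trans_le hQ)]
  exact div_le_div₀ (by norm_num) hnum hκ hQ

theorem abs_uWeight_le (h : StepParams ε β γ l) : |uWeight l γ β| ≤ 2 / (ε ^ 2 * β / 2) := by
  have hQ := h.two_sub_ge
  have hκ := h.sq_mul_half_pos
  have hnum : 0 < l * γ * β := by rw [mul_assoc]; exact mul_pos h.relax_pos h.step_mul_pos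
  rw [uWeight, abs_div, abs_of_pos hnum, abs_of_pos (hκ.trans_le hQ)]
  exact div_le_div₀ (by norm_num) (by linarith) hκ hQ

theorem abs_ℓCoeffV_le (h : StepParams ε β γ l) : |ℓCoeffV l γ β| ≤ 2 / ε := by
  have hS := h.four_sub_ge
  rw [ℓCoeffV, abs_div, abs_mul, abs_two, abs_of_pos (h.ε_pos.trans_le hS)]
  exact div_le_div₀ (by norm_num) (by linarith [h.abs_one_sub_relax_le]) h.ε_pos hS

end StepParams

section FejerStep

variable {M : H →L[ℝ] H}

/-- With `d = p - x`, so that `p - y = d - u` and `p - z = d - zCoeff l γ β • u - v`, the left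
side bounds the growth of `‖x - q‖²_M` over one step once the monotonicity term
`2 l ⟪p - z, M (p - q)⟫` is replaced by its bound `l γ β / 2 * ‖p - y‖²_M`. -/
theorem fejer_identity (hM : M.IsSymmetric) {l γ β : ℝ}
    (hQ : 2 - l * γ * β ≠ 0) (hS : 4 - 2 * l - γ * β ≠ 0) (d u v : H) :
    l * γ * β / 2 * ⟪d - u, M (d - u)⟫ - 2 * l * ⟪d - zCoeff l γ β • u - v, M d⟫
        + l ^ 2 * ⟪d - zCoeff l γ β • u - v, M (d - zCoeff l γ β • u - v)⟫
      = uWeight l γ β * ⟪u, M u⟫ + vWeight l γ β * ⟪v, M v⟫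
        - ℓWeight l γ β * ⟪d + uWeight l γ β • u - ℓCoeffV l γ β • v,
            M (d + uWeight l γ β • u - ℓCoeffV l γ β • v)⟫ := by
  simp only [map_sub, map_add, map_smul, inner_sub_left, inner_sub_right, inner_add_left,
    inner_add_right, real_inner_smul_left, real_inner_smul_right, inner_map_comm hM u d,
    inner_map_comm hM v d, inner_map_comm hM v u]
  unfold zCoeff uWeight vWeight ℓWeight ℓCoeffV
  have hS' : 4 - l * 2 - γ * β ≠ 0 := by rwa [mul_comm l]
  field_simp
  ring

theorem fejer_step (hM : M.IsSymmetric) {l γ β : ℝ} (hl : 0 ≤ l) (hQ : 2 - l * γ * β ≠ 0)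
    (hS : 4 - 2 * l - γ * β ≠ 0) {x u v p y z x' q : H} (hy : y = x + u)
    (hz : z = x + zCoeff l γ β • u + v) (hx' : x' = x + l • (p - z))
    (hkey : ⟪p - z, M (p - q)⟫ ≤ γ * β / 4 * ⟪p - y, M (p - y)⟫) :
    ⟪x' - q, M (x' - q)⟫ + ℓWeight l γ β * ⟪p - x + uWeight l γ β • u - ℓCoeffV l γ β • v,
        M (p - x + uWeight l γ β • u - ℓCoeffV l γ β • v)⟫
      ≤ ⟪x - q, M (x - q)⟫ + uWeight l γ β * ⟪u, M u⟫ + vWeight l γ β * ⟪v, M v⟫ := by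
  have hpy : p - y = (p - x) - u := by rw [hy]; abel
  have hpz : p - z = (p - x) - zCoeff l γ β • u - v := by rw [hz]; abel
  have hxq : x' - q = (x - q) + l • (p - z) := by rw [hx']; abel
  have hcross : ⟪p - z, M (x - q)⟫ = ⟪p - z, M (p - q)⟫ - ⟪p - z, M (p - x)⟫ := by
    rw [← inner_sub_right, ← map_sub, sub_sub_sub_cancel_left]
  have hid := fejer_identity hM hQ hS (p - x) u v
  rw [← hpy, ← hpz] at hid
  rw [hxq, inner_map_add_smul_self hM, hcross]
  linarith [mul_le_mul_of_nonneg_left hkey hl]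

end FejerStep

section Iteration

variable {M : H →L[ℝ] H} {c : ℝ}

theorem isBounded_range_of_tendsto_inner_map_sub (hc0 : 0 < c)
    (hc : ∀ a, ⟪a, M a⟫ ≥ c * ‖a‖ ^ 2) {x : ℕ → H} {q : H}
    (h : ∃ L, Tendsto (fun n => ⟪x n - q, M (x n - q)⟫) atTop (𝓝 L)) :
    Bornology.IsBounded (Set.range x) := by
  obtain ⟨L, hL⟩ := h
  obtain ⟨R, hR⟩ := isBounded_iff_forall_norm_le.mp (Metric.isBounded_range_of_tendsto _ hL)
  refine (Metric.isBounded_closedBall (x := q) (r := √(R / c))).subset ?_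
  rintro _ ⟨n, rfl⟩
  rw [Metric.mem_closedBall, dist_eq_norm, Real.le_sqrt (norm_nonneg _) ((div_nonneg
    (inner_map_self_nonneg hc0 hc _) hc0.le).trans (div_le_div_of_nonneg_right
    ((le_abs_self _).trans (hR _ ⟨n, rfl⟩)) hc0.le)), le_div_iff₀ hc0, mul_comm]
  exact (hc _).trans ((le_abs_self _).trans (hR _ ⟨n, rfl⟩))

theorem tendsto_of_fejer_step (hM : M.IsSymmetric) (hpos : ∀ a, 0 ≤ ⟪a, M a⟫) {ε β : ℝ}
    {ζ γ lam : ℕ → ℝ} (hpar : ∀ n, StepParams ε β (γ n) (lam n)) (hζ : ∀ n, ζ n ≤ 1 - ε)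
    {x u v p y z : ℕ → H} {ℓsq : ℕ → ℝ} {q : H} (hy : ∀ n, y n = x n + u n)
    (hz : ∀ n, z n = x n + zCoeff (lam n) (γ n) β • u n + v n)
    (hx : ∀ n, x (n + 1) = x n + lam n • (p n - z n))
    (hℓ : ∀ n, ℓsq n = ℓWeight (lam n) (γ n) β *
      mnorm M (p n - x n + uWeight (lam n) (γ n) β • u n - ℓCoeffV (lam n) (γ n) β • v n) ^ 2)
    (hdev : ∀ n, uWeight (lam (n + 1)) (γ (n + 1)) β * mnorm M (u (n + 1)) ^ 2
      + vWeight (lam (n + 1)) (γ (n + 1)) β * mnorm M (v (n + 1)) ^ 2 ≤ ζ n * ℓsq n)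
    (hkey : ∀ n, ⟪p n - z n, M (p n - q)⟫ ≤ γ n * β / 4 * ⟪p n - y n, M (p n - y n)⟫) :
    Tendsto ℓsq atTop (𝓝 0) ∧ Tendsto (fun n => uWeight (lam n) (γ n) β * ⟪u n, M (u n)⟫
      + vWeight (lam n) (γ n) β * ⟪v n, M (v n)⟫) atTop (𝓝 0)
      ∧ ∃ L, Tendsto (fun n => ⟪x n - q, M (x n - q)⟫) atTop (𝓝 L) := by
  refine tendsto_of_add_le_add_of_le_mul (hpar 0).ε_pos (fun n => hpos _) (fun n => ?_)
    (fun n => ?_) hζ (fun n => ?_) (fun n => ?_)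
  · exact add_nonneg (mul_nonneg (hpar n).uWeight_nonneg (hpos _))
      (mul_nonneg (hpar n).vWeight_nonneg (hpos _))
  · rw [hℓ n]
    exact mul_nonneg (hpar n).ℓWeight_nonneg (sq_nonneg _)
  · rw [hℓ n, mnorm_sq hpos, ← add_assoc]
    exact fejer_step hM (hpar n).relax_pos.le (hpar n).two_sub_pos.ne'
      (hpar n).four_sub_pos.ne' (hy n) (hz n) (hx n) (hkey n)
  · simpa only [mnorm_sq hpos] using hdev n

theorem tendsto_zero_of_tendsto_weights (hc0 : 0 < c) (hc : ∀ a, ⟪a, M a⟫ ≥ c * ‖a‖ ^ 2)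
    {ε β : ℝ} {γ lam : ℕ → ℝ} (hpar : ∀ n, StepParams ε β (γ n) (lam n)) {x u v p : ℕ → H}
    {ℓsq : ℕ → ℝ} (hℓ : ∀ n, ℓsq n = ℓWeight (lam n) (γ n) β *
      mnorm M (p n - x n + uWeight (lam n) (γ n) β • u n - ℓCoeffV (lam n) (γ n) β • v n) ^ 2)
    (hℓ0 : Tendsto ℓsq atTop (𝓝 0))
    (hW : Tendsto (fun n => uWeight (lam n) (γ n) β * ⟪u n, M (u n)⟫
      + vWeight (lam n) (γ n) β * ⟪v n, M (v n)⟫) atTop (𝓝 0)) :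
    Tendsto u atTop (𝓝 0) ∧ Tendsto v atTop (𝓝 0) ∧ Tendsto (fun n => p n - x n) atTop (𝓝 0) := by
  have hpos := inner_map_self_nonneg hc0 hc
  have hε := (hpar 0).ε_pos
  have hβ := (hpar 0).β_pos
  have huv (n : ℕ) := mul_le_mul_of_nonneg_right (hpar n).uWeight_ge (hpos (u n))
  have hvv (n : ℕ) := mul_le_mul_of_nonneg_right (hpar n).vWeight_ge (hpos (v n))
  have hu0 (n : ℕ) : 0 ≤ ε ^ 2 * β / 2 * ⟪u n, M (u n)⟫ := mul_nonneg (by positivity) (hpos _)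
  have hv0 (n : ℕ) : 0 ≤ ε ^ 3 * β / 8 * ⟪v n, M (v n)⟫ := mul_nonneg (by positivity) (hpos _)
  have hu : Tendsto u atTop (𝓝 0) := tendsto_zero_of_tendsto_inner_map_self hc0 hc <|
    tendsto_zero_of_const_mul_le (κ := ε ^ 2 * β / 2) (by positivity) (fun n => hpos _)
      (fun n => by linarith [huv n, hvv n, hv0 n]) hW
  have hv : Tendsto v atTop (𝓝 0) := tendsto_zero_of_tendsto_inner_map_self hc0 hc <|
    tendsto_zero_of_const_mul_le (κ := ε ^ 3 * β / 8) (by positivity) (fun n => hpos _)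
      (fun n => by linarith [huv n, hvv n, hu0 n]) hW
  have he := tendsto_zero_of_tendsto_inner_map_self hc0 hc <|
    tendsto_zero_of_const_mul_le (κ := ε ^ 2 / 2) (by positivity) (fun n => hpos _)
      (fun n => (mul_le_mul_of_nonneg_right (hpar n).ℓWeight_ge (hpos _)).trans_eq
        (by rw [hℓ n, mnorm_sq hpos])) hℓ0
  have hU : IsBoundedUnder (· ≤ ·) atTop (norm ∘ fun n => uWeight (lam n) (γ n) β) :=
    isBoundedUnder_of ⟨_, fun n => (hpar n).abs_uWeight_le⟩
  have hV : IsBoundedUnder (· ≤ ·) atTop (norm ∘ fun n => ℓCoeffV (lam n) (γ n) β) :=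
    isBoundedUnder_of ⟨_, fun n => (hpar n).abs_ℓCoeffV_le⟩
  refine ⟨hu, hv, ?_⟩
  have h := (he.sub (hU.smul_tendsto_zero hu)).add (hV.smul_tendsto_zero hv)
  rw [sub_zero, add_zero] at h
  exact h.congr fun n => by abel

theorem tendsto_sub_of_tendsto_deviations {ε β : ℝ} {γ lam : ℕ → ℝ}
    (hpar : ∀ n, StepParams ε β (γ n) (lam n)) {x u v p y z : ℕ → H}
    (hy : ∀ n, y n = x n + u n) (hz : ∀ n, z n = x n + zCoeff (lam n) (γ n) β • u n + v n)
    (hu : Tendsto u atTop (𝓝 0)) (hv : Tendsto v atTop (𝓝 0))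
    (hpx : Tendsto (fun n => p n - x n) atTop (𝓝 0)) :
    Tendsto (fun n => p n - y n) atTop (𝓝 0) ∧ Tendsto (fun n => z n - p n) atTop (𝓝 0) := by
  have hZ : IsBoundedUnder (· ≤ ·) atTop (norm ∘ fun n => zCoeff (lam n) (γ n) β) :=
    isBoundedUnder_of ⟨_, fun n => (hpar n).abs_zCoeff_le⟩
  have hzp := (hpx.neg.add (hZ.smul_tendsto_zero hu)).add hv
  rw [neg_zero, add_zero, add_zero] at hzp
  refine ⟨by simpa [hy, sub_add_eq_sub_sub] using hpx.sub hu, hzp.congr fun n => ?_⟩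
  rw [hz n]
  abel

/-- Young's inequality with weight `1 / (2 β)` absorbs `⟪g n, p n - y n⟫` into half of the
cocoercivity term. -/
theorem tendsto_zero_of_mul_cocoercive_add_inner_le (hM : M.IsSymmetric) (hc0 : 0 < c)
    (hc : ∀ a, ⟪a, M a⟫ ≥ c * ‖a‖ ^ 2) {Minv : H →L[ℝ] H} (hMinv : ∀ a, M (Minv a) = a)
    {β ε : ℝ} (hβ : 0 < β) (hε : 0 < ε) {γ : ℕ → ℝ} (hγ : ∀ n, ε ≤ γ n) {g p y z : ℕ → H}
    {q : H} (hkey : ∀ n, γ n * ((1 / β) * ⟪g n, Minv (g n)⟫ + ⟪g n, p n - y n⟫)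
      ≤ ⟪z n - p n, M (p n - q)⟫)
    (hpy : Tendsto (fun n => p n - y n) atTop (𝓝 0))
    (hzp : Tendsto (fun n => z n - p n) atTop (𝓝 0)) (hp : Bornology.IsBounded (Set.range p)) :
    Tendsto g atTop (𝓝 0) := by
  obtain ⟨R, hR⟩ := isBounded_iff_forall_norm_le.mp hp
  have hK : Tendsto (fun n => ⟪z n - p n, M (p n - q)⟫) atTop (𝓝 0) :=
    hzp.op_zero_isBoundedUnder_le (isBoundedUnder_of ⟨‖M‖ * (R + ‖q‖), fun n =>
      (M.le_opNorm _).trans (mul_le_mul_of_nonneg_left ((norm_sub_le _ _).trans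
        (by linarith [hR _ ⟨n, rfl⟩])) (norm_nonneg _))⟩) (fun a b => ⟪a, b⟫)
      (norm_inner_le_norm (𝕜 := ℝ))
  have hD : Tendsto (fun n => ⟪p n - y n, M (p n - y n)⟫) atTop (𝓝 0) := by
    simpa using hpy.inner (𝕜 := ℝ) ((M.continuous.tendsto 0).comp hpy)
  have hbound (n : ℕ) : 1 / (2 * β) * ⟪g n, Minv (g n)⟫
      ≤ β / 2 * ⟪p n - y n, M (p n - y n)⟫ + |⟪z n - p n, M (p n - q)⟫| / ε := by
    have hγ0 : 0 < γ n := hε.trans_le (hγ n)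
    have hyoung := neg_inner_le_of_rightInverse hM (inner_map_self_nonneg hc0 hc) hMinv
      (t := 1 / (2 * β)) (by positivity) (g n) (p n - y n)
    rw [show ⟪p n - y n, M (p n - y n)⟫ / (4 * (1 / (2 * β)))
      = β / 2 * ⟪p n - y n, M (p n - y n)⟫ by field_simp; ring] at hyoung
    have hβ2 : 1 / β = 2 * (1 / (2 * β)) := by field_simp
    have h1 : γ n * (1 / (2 * β) * ⟪g n, Minv (g n)⟫ - β / 2 * ⟪p n - y n, M (p n - y n)⟫)
        ≤ |⟪z n - p n, M (p n - q)⟫| :=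
      (mul_le_mul_of_nonneg_left (by rw [hβ2]; linarith) hγ0.le).trans
        ((hkey n).trans (le_abs_self _))
    have h2 := (le_div_iff₀' hγ0).mpr h1
    have h3 := div_le_div_of_nonneg_left (abs_nonneg ⟪z n - p n, M (p n - q)⟫) hε (hγ n)
    linarith
  refine tendsto_zero_of_tendsto_inner_rightInverse_self hMinv hc0 hc <|
    tendsto_zero_of_const_mul_le (by positivity)
      (fun n => inner_rightInverse_self_nonneg hMinv hc0 hc _) hbound ?_
  simpa using (hD.const_mul (β / 2)).add (hK.abs.div_const ε)

theorem neg_mem_of_tendstoWeakly_comp [CompleteSpace H] {A : H → Set H}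
    (hAmono : ∀ a b ua vb : H, ua ∈ A a → vb ∈ A b → ⟪ua - vb, a - b⟫ ≥ 0)
    (hAmax : ∀ a ua : H, (∀ b vb : H, vb ∈ A b → ⟪ua - vb, a - b⟫ ≥ 0) → ua ∈ A a)
    {C : H → H} {Minv : H →L[ℝ] H} {β : ℝ} (hβ : 0 < β)
    (hMinv : ∀ g, ⟪g, Minv g⟫ ≤ 0 → g = 0)
    (hC : ∀ a b, (1 / β) * ⟪C a - C b, Minv (C a - C b)⟫ ≤ ⟪C a - C b, a - b⟫)
    {ε : ℝ} (hε : 0 < ε) {γ : ℕ → ℝ} (hγ : ∀ n, ε ≤ γ n) {x p y z : ℕ → H} {q : H}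
    (hres : ∀ n, (γ n)⁻¹ • M (z n - p n) - C (y n) ∈ A (p n))
    (hpx : Tendsto (fun n => p n - x n) atTop (𝓝 0))
    (hyx : Tendsto (fun n => y n - x n) atTop (𝓝 0))
    (hzp : Tendsto (fun n => z n - p n) atTop (𝓝 0))
    (hCy : Tendsto (fun n => C (y n)) atTop (𝓝 (C q))) {φ : ℕ → ℕ} {w : H}
    (hφ : Tendsto φ atTop atTop) (hw : TendstoWeakly (x ∘ φ) w) : -C w ∈ A w := by
  have hr : Tendsto (fun n => (γ n)⁻¹ • M (z n - p n) - C (y n)) atTop (𝓝 (-C q)) := by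
    have hγinv : IsBoundedUnder (· ≤ ·) atTop (norm ∘ fun n => (γ n)⁻¹) :=
      isBoundedUnder_of ⟨ε⁻¹, fun n => by
        simpa [abs_of_pos (hε.trans_le (hγ n))] using inv_anti₀ hε (hγ n)⟩
    have hMzp : Tendsto (fun n => M (z n - p n)) atTop (𝓝 0) := by
      simpa only [map_zero, Function.comp_def] using (M.continuous.tendsto 0).comp hzp
    have h := (hγinv.smul_tendsto_zero hMzp).sub hCy
    rwa [zero_sub] at h
  have hCw : C w = C q :=
    eq_of_tendstoWeakly_of_cocoercive hβ hMinv hC (hw.of_tendsto_sub (hyx.comp hφ)) (hCy.comp hφ)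
  rw [hCw]
  exact mem_of_tendstoWeakly_of_tendsto hAmono hAmax (hw.of_tendsto_sub (hpx.comp hφ))
    (hr.comp hφ) fun n => hres (φ n)

end Iteration

end

theorem weak_convergence_general
    {H : Type*} [NormedAddCommGroup H] [InnerProductSpace ℝ H] [CompleteSpace H]
    (M : H →L[ℝ] H)
    (hMsa : ∀ a b : H, ⟪M a, b⟫ = ⟪a, M b⟫)
    (hMpos : ∃ c > (0:ℝ), ∀ a : H, ⟪a, M a⟫ ≥ c * ‖a‖ ^ 2)
    (Minv : H →L[ℝ] H)
    (hMinv₂ : ∀ a : H, M (Minv a) = a)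
    (β : ℝ) (hβ : 0 < β)
    (A : H → Set H)
    (hAmono : ∀ a b ua vb : H, ua ∈ A a → vb ∈ A b → ⟪ua - vb, a - b⟫ ≥ 0)
    (hAmax : ∀ a ua : H, (∀ b vb : H, vb ∈ A b → ⟪ua - vb, a - b⟫ ≥ 0) → ua ∈ A a)
    (C : H → H)
    (hC : ∀ a b : H, ⟪C a - C b, a - b⟫ ≥ (1 / β) * mnorm Minv (C a - C b) ^ 2)
    (hzer : ∃ w : H, -C w ∈ A w)
    (ε : ℝ) (hε0 : 0 < ε)
    (ζ γ lam : ℕ → ℝ)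
    (hζ : ∀ n, 0 ≤ ζ n ∧ ζ n ≤ 1 - ε)
    (hγ : ∀ n, ε ≤ γ n ∧ γ n ≤ (4 - 3 * ε) / β)
    (hlam : ∀ n, ε ≤ lam n ∧ lam n ≤ 2 - γ n * β / 2 - ε / 2)
    (x u v p y z : ℕ → H) (ℓsq : ℕ → ℝ)
    (hy : ∀ n, y n = x n + u n)
    (hz : ∀ n, z n = x n + (((1 - lam n) * γ n * β) / (2 - lam n * γ n * β)) • u n + v n)
    (hp : ∀ n, M (z n) - M (p n) - γ n • C (y n) ∈ γ n • A (p n))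
    (hx : ∀ n, x (n + 1) = x n + lam n • (p n - z n))
    (hℓ : ∀ n, ℓsq n = (lam n * (4 - 2 * lam n - γ n * β) / 2) *
      mnorm M (p n - x n + ((lam n * γ n * β) / (2 - lam n * γ n * β)) • u n
        - ((2 * (1 - lam n)) / (4 - 2 * lam n - γ n * β)) • v n) ^ 2)
    (hdev : ∀ n, (lam (n+1) * γ (n+1) * β / (2 - lam (n+1) * γ (n+1) * β)) * mnorm M (u (n+1)) ^ 2
        + (lam (n+1) * (2 - lam (n+1) * γ (n+1) * β) / (4 - 2 * lam (n+1) - γ (n+1) * β)) * mnorm M (v (n+1)) ^ 2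
        ≤ ζ n * ℓsq n)
    :
    ∃ xb : H, -C xb ∈ A xb ∧
      ∀ w : H, Tendsto (fun n => ⟪x n, w⟫) atTop (𝓝 ⟪xb, w⟫) := by
  obtain ⟨c, hc0, hc⟩ := hMpos
  obtain ⟨xs, hxs⟩ := hzer
  have hpos := inner_map_self_nonneg hc0 hc
  have hpar (n : ℕ) : StepParams ε β (γ n) (lam n) := ⟨hε0, hβ, (hγ n).1, (hlam n).1, (hlam n).2⟩
  have hCinv (a b : H) : (1 / β) * ⟪C a - C b, Minv (C a - C b)⟫ ≤ ⟪C a - C b, a - b⟫ := by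
    simpa only [mnorm_sq (inner_rightInverse_self_nonneg hMinv₂ hc0 hc)] using hC a b
  have hres (n : ℕ) : (γ n)⁻¹ • M (z n - p n) - C (y n) ∈ A (p n) :=
    inv_smul_sub_mem_of_sub_smul_mem_smul (hpar n).step_pos.ne'
      (by simpa only [map_sub] using hp n)
  have hkey (q : H) (hq : -C q ∈ A q) (n : ℕ) :=
    mul_cocoercive_add_inner_le hAmono hMsa (hpar n).step_pos (hCinv _ _) (hres n) hq
  have hfejer (q : H) (hq : -C q ∈ A q) :=
    tendsto_of_fejer_step hMsa hpos hpar (fun n => (hζ n).2) hy hz hx hℓ hdev fun n =>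
      inner_sub_map_le_of_cocoercive hMsa hpos hMinv₂ hβ (hpar n).step_pos.le (hkey q hq n)
  obtain ⟨hℓ0, hW0, hdist⟩ := hfejer xs hxs
  obtain ⟨hu, hv, hpx⟩ := tendsto_zero_of_tendsto_weights hc0 hc hpar hℓ hℓ0 hW0
  obtain ⟨hpy, hzp⟩ := tendsto_sub_of_tendsto_deviations hpar hy hz hu hv hpx
  have hxb := isBounded_range_of_tendsto_inner_map_sub hc0 hc hdist
  have hCy : Tendsto (fun n => C (y n)) atTop (𝓝 (C xs)) := by
    simpa using (tendsto_zero_of_mul_cocoercive_add_inner_le hMsa hc0 hc hMinv₂ hβ hε0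
      (fun n => (hγ n).1) (hkey xs hxs) hpy hzp
      (isBounded_range_of_tendsto_sub hxb hpx)).add_const (C xs)
  exact exists_tendstoWeakly_of_opial hc0 hc hMsa (S := {q | -C q ∈ A q}) hxb
    (fun q hq => (hfejer q hq).2.2) fun φ w hφ hw =>
      neg_mem_of_tendstoWeakly_comp hAmono hAmax hβ
        (fun g => eq_zero_of_inner_rightInverse_self_le_zero hMinv₂ hc0 hc) hCinv hε0
        (fun n => (hγ n).1) hres hpx (hu.congr fun n => by rw [hy n, add_sub_cancel_left])
        hzp hCy hφ hw

/-- weak convergence of the iterates to a zero of A + C. -/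
theorem weak_convergence
    {H : Type*} [NormedAddCommGroup H] [InnerProductSpace ℝ H] [CompleteSpace H]
    (M : H →L[ℝ] H)
    (hMsa : ∀ a b : H, ⟪M a, b⟫ = ⟪a, M b⟫)
    (hMpos : ∃ c > (0:ℝ), ∀ a : H, ⟪a, M a⟫ ≥ c * ‖a‖ ^ 2)
    (Minv : H →L[ℝ] H)
    (hMinv₁ : ∀ a : H, Minv (M a) = a)
    (hMinv₂ : ∀ a : H, M (Minv a) = a)
    (β : ℝ) (hβ : 0 < β)
    (A : H → Set H)
    (hAmono : ∀ a b ua vb : H, ua ∈ A a → vb ∈ A b → ⟪ua - vb, a - b⟫ ≥ 0)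
    (hAmax : ∀ a ua : H, (∀ b vb : H, vb ∈ A b → ⟪ua - vb, a - b⟫ ≥ 0) → ua ∈ A a)
    (C : H → H)
    (hC : ∀ a b : H, ⟪C a - C b, a - b⟫ ≥ (1 / β) * mnorm Minv (C a - C b) ^ 2)
    (hzer : ∃ w : H, -C w ∈ A w)
    (ε : ℝ) (hε0 : 0 < ε) (hε1 : ε < min 1 (4 / (3 + β)))
    (ζ γ lam : ℕ → ℝ)
    (hζ : ∀ n, 0 ≤ ζ n ∧ ζ n ≤ 1 - ε)
    (hγ : ∀ n, ε ≤ γ n ∧ γ n ≤ (4 - 3 * ε) / β)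
    (hlam : ∀ n, ε ≤ lam n ∧ lam n ≤ 2 - γ n * β / 2 - ε / 2)
    (x u v p y z : ℕ → H) (ℓsq : ℕ → ℝ)
    (hu0 : u 0 = 0) (hv0 : v 0 = 0)
    (hy : ∀ n, y n = x n + u n)
    (hz : ∀ n, z n = x n + (((1 - lam n) * γ n * β) / (2 - lam n * γ n * β)) • u n + v n)
    (hp : ∀ n, M (z n) - M (p n) - γ n • C (y n) ∈ γ n • A (p n))
    (hx : ∀ n, x (n + 1) = x n + lam n • (p n - z n))
    (hℓ : ∀ n, ℓsq n = (lam n * (4 - 2 * lam n - γ n * β) / 2) *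
      mnorm M (p n - x n + ((lam n * γ n * β) / (2 - lam n * γ n * β)) • u n
        - ((2 * (1 - lam n)) / (4 - 2 * lam n - γ n * β)) • v n) ^ 2)
    (hdev : ∀ n, (lam (n+1) * γ (n+1) * β / (2 - lam (n+1) * γ (n+1) * β)) * mnorm M (u (n+1)) ^ 2
        + (lam (n+1) * (2 - lam (n+1) * γ (n+1) * β) / (4 - 2 * lam (n+1) - γ (n+1) * β)) * mnorm M (v (n+1)) ^ 2
        ≤ ζ n * ℓsq n)
    :
    ∃ xb : H, -C xb ∈ A xb ∧
      ∀ w : H, Tendsto (fun n => ⟪x n, w⟫) atTop (𝓝 ⟪xb, w⟫) :=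
  weak_convergence_general M hMsa hMpos Minv hMinv₂ β hβ A hAmono hAmax C hC hzer ε hε0 ζ γ lam hζ
    hγ hlam x u v p y z ℓsq hy hz hp hx hℓ hdev
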